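/- arXiv:1707.06486 — 2 statements merged into one kernel-verified Lean document; each statement's English description precedes it below -/
import Mathlib

section
/- Assume that for some x₀ ∈ ℝ and some γ ∈ {−1, 1} one has ∏_{i=0}^{N−1} B̂^i(x₀) = γ·Id. Then w_N′(x₀) = (α_{N−1}/α₀)·(w_{N−2}^{[1]})′(x₀), and moreover the strict inequality w_{N−1}′(x₀)·(w_{N−1}^{[1]})′(x₀) > w_N′(x₀)·(w_{N−2}^{[1]})′(x₀) holds. -/
/-!
At a point where the monodromy `∏ B̂^i(x₀)` is `γ • 1`, the columns of the partial products are
the canonical solutions `a n = w_n(x₀)` and `u n = -(α₋₁ / α₀) w^{[1]}_{n-1}(x₀)` of the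
three-term recurrence, so `a (N - 1) = u N = 0` and `a N = u (N - 1) = γ`. The
Christoffel–Darboux identity `∑_{k<N} p_k q_k = α_{N-1} (p'_N q_{N-1} - p'_{N-1} q_N)` for the
pairs `(a, a)`, `(a, u)`, `(u, a)`, `(u, u)` expresses `∑ a²`, `∑ a u` and `∑ u²` through the
derivatives at `N - 1` and `N`. Comparing the two expressions for `∑ a u` gives the identity
(with `α₋₁ = α_{N-1}` by periodicity); the inequality is the Cauchy–Schwarz inequality
`(∑ a u)² < ∑ a² · ∑ u²`, strict because `a 0 = 1` while `u 0 = 0`.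
-/

/-- The product `C (n₀ + len - 1) * ⋯ * C n₀` of matrices, with larger indices on the left;
equal to the identity when `len = 0`. -/
def prodDesc (C : ℤ → Matrix (Fin 2) (Fin 2) ℝ) (n₀ : ℤ) : ℕ → Matrix (Fin 2) (Fin 2) ℝ
  | 0 => 1
  | len + 1 => C (n₀ + len) * prodDesc C n₀ len

/-- The transfer matrix `B̂^j(x)` associated with the sequences `α`, `β`. -/
noncomputable def transferMatrix (α β : ℤ → ℝ) (j : ℤ) (x : ℝ) : Matrix (Fin 2) (Fin 2) ℝ :=
  !![0, 1; -(α (j - 1) / α j), (x - β j) / α j]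

open Finset

/-- With `f = 0` this is the recurrence of orthonormal polynomials evaluated at `x`; their
derivatives in `x` satisfy it with `f = p`. -/
def ThreeTermRec (A B : ℕ → ℝ) (x : ℝ) (f p : ℕ → ℝ) : Prop :=
  ∀ n, A n * p n + B (n + 1) * p (n + 1) + A (n + 1) * p (n + 2) = x * p (n + 1) + f (n + 1)

def prependZero (p : ℕ → ℝ) : ℕ → ℝ
  | 0 => 0
  | n + 1 => p n

@[simp] lemma prependZero_zero : prependZero 0 = 0 := by
  funext n; cases n <;> rfl

theorem Finset.sum_mul_sq_lt_sq_mul_sq_of_mem {ι : Type*} {s : Finset ι} {f g : ι → ℝ} {i : ι}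
    (hi : i ∈ s) (hf : f i ≠ 0) (hg : g i = 0) (hpos : 0 < ∑ j ∈ s, g j ^ 2) :
    (∑ j ∈ s, f j * g j) ^ 2 < (∑ j ∈ s, f j ^ 2) * ∑ j ∈ s, g j ^ 2 := by
  classical
  have hfg := sum_erase s (f := fun j => f j * g j) (a := i) (by simp [hg])
  have hgg := sum_erase s (f := fun j => g j ^ 2) (a := i) (by simp [hg])
  rw [← hgg] at hpos
  rw [← hfg, ← hgg, ← add_sum_erase s (fun j => f j ^ 2) hi]
  calc (∑ j ∈ s.erase i, f j * g j) ^ 2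
      ≤ (∑ j ∈ s.erase i, f j ^ 2) * ∑ j ∈ s.erase i, g j ^ 2 := sum_mul_sq_le_sq_mul_sq _ _ _
    _ < (f i ^ 2 + ∑ j ∈ s.erase i, f j ^ 2) * ∑ j ∈ s.erase i, g j ^ 2 := by
      gcongr
      exact lt_add_of_pos_left _ (by positivity)

namespace ThreeTermRec

variable {A B : ℕ → ℝ} {x : ℝ} {f p : ℕ → ℝ}

lemma smul (h : ThreeTermRec A B x f p) (c : ℝ) : ThreeTermRec A B x (c • f) (c • p) := by
  intro n
  simp only [Pi.smul_apply, smul_eq_mul]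
  linear_combination c * h n

lemma homogeneous (h : ThreeTermRec A B x 0 p) (n : ℕ) :
    A n * p n + B (n + 1) * p (n + 1) + A (n + 1) * p (n + 2) = x * p (n + 1) := by
  simpa using h n

lemma prependZero_of_shift (h : ThreeTermRec (fun n => A (n + 1)) (fun n => B (n + 1)) x f p)
    (h₀ : B 1 * p 0 + A 1 * p 1 = x * p 0 + f 0) :
    ThreeTermRec A B x (prependZero f) (prependZero p)
  | 0 => by simpa [prependZero] using h₀
  | n + 1 => h n

lemma prependZero_smul {b e : ℕ → ℝ}
    (hb : ThreeTermRec (fun n => A (n + 1)) (fun n => B (n + 1)) x 0 b)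
    (he : ThreeTermRec (fun n => A (n + 1)) (fun n => B (n + 1)) x b e)
    (hb₀ : b 0 = 1) (hb₁ : A 1 * b 1 = x - B 1) (he₀ : e 0 = 0) (he₁ : A 1 * e 1 = 1) (c : ℝ) :
    ThreeTermRec A B x 0 (c • prependZero b) ∧
      ThreeTermRec A B x (c • prependZero b) (c • prependZero e) := by
  constructor
  · simpa only [prependZero_zero, smul_zero] using
      (hb.prependZero_of_shift (by rw [hb₀, hb₁]; simp)).smul c
  · exact (he.prependZero_of_shift (by rw [hb₀, he₀, he₁]; simp)).smul c

theorem christoffel_darboux {p' q : ℕ → ℝ} (hp : ThreeTermRec A B x p p')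
    (hq : ThreeTermRec A B x 0 q) (h₀ : p 0 * q 0 = A 0 * (p' 1 * q 0 - p' 0 * q 1)) (n : ℕ) :
    ∑ k ∈ range (n + 1), p k * q k = A n * (p' (n + 1) * q n - p' n * q (n + 1)) := by
  induction n with
  | zero => simpa using h₀
  | succ n ih =>
    rw [sum_range_succ, ih]
    linear_combination p' (n + 1) * hq.homogeneous n - q (n + 1) * hp n

theorem deriv_eq_and_lt_of_boundary {a d u u' : ℕ → ℝ} {n : ℕ} {γ : ℝ}
    (ha : ThreeTermRec A B x 0 a) (hd : ThreeTermRec A B x a d)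
    (hu : ThreeTermRec A B x 0 u) (hu' : ThreeTermRec A B x u u')
    (ha₀ : a 0 = 1) (hd₀ : d 0 = 0) (hd₁ : A 0 * d 1 = 1)
    (hu₀ : u 0 = 0) (hu'₀ : u' 0 = 0) (hu'₁ : u' 1 = 0)
    (hA : 0 < A n) (hγ : γ ≠ 0)
    (ha₁ : a n = 0) (ha₂ : a (n + 1) = γ) (hu₁ : u n = γ) (hu₂ : u (n + 1) = 0) :
    d (n + 1) = -u' n ∧ d n * u' (n + 1) < d (n + 1) * u' n := by
  have hS : A n * γ * d n = -∑ k ∈ range (n + 1), a k * a k := by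
    rw [christoffel_darboux hd ha (by simp [ha₀, hd₀, hd₁]) n, ha₁, ha₂]; ring
  have hM : A n * γ * d (n + 1) = ∑ k ∈ range (n + 1), a k * u k := by
    rw [christoffel_darboux hd hu (by simp [hu₀, hd₀]) n, hu₁, hu₂]; ring
  have hM' : A n * γ * u' n = -∑ k ∈ range (n + 1), a k * u k := by
    rw [← sum_congr rfl fun k _ => mul_comm (u k) (a k),
      christoffel_darboux hu' ha (by simp [hu₀, hu'₀, hu'₁]) n, ha₁, ha₂]; ring
  have hU : A n * γ * u' (n + 1) = ∑ k ∈ range (n + 1), u k * u k := by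
    rw [christoffel_darboux hu' hu (by simp [hu₀, hu'₀, hu'₁]) n, hu₁, hu₂]; ring
  have hcs : (∑ k ∈ range (n + 1), a k * u k) ^ 2
      < (∑ k ∈ range (n + 1), a k * a k) * ∑ k ∈ range (n + 1), u k * u k := by
    simp only [← sq]
    refine sum_mul_sq_lt_sq_mul_sq_of_mem (mem_range.2 n.succ_pos) (by simp [ha₀]) hu₀ ?_
    calc (0 : ℝ) < u n ^ 2 := by rw [hu₁]; positivity
      _ ≤ _ := single_le_sum (fun _ _ => sq_nonneg _) (self_mem_range_succ n)
  constructor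
  · apply mul_left_cancel₀ (mul_ne_zero hA.ne' hγ)
    linear_combination hM + hM'
  · refine lt_of_mul_lt_mul_left ?_ (sq_nonneg (A n * γ))
    calc (A n * γ) ^ 2 * (d n * u' (n + 1))
        = (A n * γ * d n) * (A n * γ * u' (n + 1)) := by ring
      _ < (A n * γ * d (n + 1)) * (A n * γ * u' n) := by rw [hS, hU, hM, hM']; linarith
      _ = (A n * γ) ^ 2 * (d (n + 1) * u' n) := by ring

end ThreeTermRec

lemma differentiable_of_threeTermRec {A B : ℕ → ℝ} {F : ℕ → ℝ → ℝ} (hA : ∀ n, A n ≠ 0)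
    (hF : ∀ x, ThreeTermRec A B x 0 (F · x)) (h₀ : Differentiable ℝ (F 0))
    (h₁ : Differentiable ℝ (F 1)) (n : ℕ) : Differentiable ℝ (F n) := by
  induction n using Nat.twoStepInduction with
  | zero => exact h₀
  | one => exact h₁
  | more n ih₀ ih₁ =>
    have hstep :
        F (n + 2) = fun y => ((y - B (n + 1)) * F (n + 1) y - A n * F n y) / A (n + 1) := by
      funext y
      rw [eq_div_iff (hA _)]
      linear_combination (hF y).homogeneous n
    rw [hstep]
    fun_prop

lemma threeTermRec_deriv {A B : ℕ → ℝ} {F : ℕ → ℝ → ℝ} (hF : ∀ x, ThreeTermRec A B x 0 (F · x))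
    (hd : ∀ n, Differentiable ℝ (F n)) (x : ℝ) :
    ThreeTermRec A B x (F · x) (fun n => deriv (F n) x) := by
  intro n
  have h k : HasDerivAt (F k) (deriv (F k) x) x := (hd k x).hasDerivAt
  have hL : HasDerivAt (fun y => A n * F n y + B (n + 1) * F (n + 1) y + A (n + 1) * F (n + 2) y)
      (A n * deriv (F n) x + B (n + 1) * deriv (F (n + 1)) x
        + A (n + 1) * deriv (F (n + 2)) x) x :=
    (((h n).const_mul _).add ((h _).const_mul _)).add ((h _).const_mul _)
  have hR : HasDerivAt (fun y => y * F (n + 1) y)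
      (1 * F (n + 1) x + x * deriv (F (n + 1)) x) x := (hasDerivAt_id x).mul (h _)
  have heq : (fun y => A n * F n y + B (n + 1) * F (n + 1) y + A (n + 1) * F (n + 2) y)
      = fun y => y * F (n + 1) y := funext fun y => (hF y).homogeneous n
  rw [heq] at hL
  linear_combination hL.unique hR

lemma threeTermRec_of_rec {α β : ℤ → ℝ} {W : ℕ → ℕ → ℝ → ℝ}
    (hWrec : ∀ k : ℕ, ∀ n : ℕ, 1 ≤ n → ∀ x : ℝ,
      α ((n : ℤ) + k - 1) * W k (n - 1) x + β ((n : ℤ) + k) * W k n x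
        + α ((n : ℤ) + k) * W k (n + 1) x = x * W k n x) (k : ℕ) (x : ℝ) :
    ThreeTermRec (fun n : ℕ => α (n + k : ℕ)) (fun n : ℕ => β (n + k : ℕ)) x 0 (W k · x) := by
  intro n
  have h := hWrec k (n + 1) (by omega) x
  push_cast [Nat.add_sub_cancel] at h ⊢
  rw [show (n : ℤ) + 1 + k - 1 = n + k by ring] at h
  simpa using h

lemma threeTermRec_deriv_of_rec {α β : ℤ → ℝ} {W : ℕ → ℕ → ℝ → ℝ} (hα : ∀ j, α j ≠ 0)
    (hW0 : ∀ (k : ℕ) (x : ℝ), W k 0 x = 1)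
    (hW1 : ∀ (k : ℕ) (x : ℝ), W k 1 x = (x - β k) / α k)
    (hWrec : ∀ k : ℕ, ∀ n : ℕ, 1 ≤ n → ∀ x : ℝ,
      α ((n : ℤ) + k - 1) * W k (n - 1) x + β ((n : ℤ) + k) * W k n x
        + α ((n : ℤ) + k) * W k (n + 1) x = x * W k n x) (k : ℕ) (x : ℝ) :
    ThreeTermRec (fun n : ℕ => α (n + k : ℕ)) (fun n : ℕ => β (n + k : ℕ)) x (W k · x)
      (fun n => deriv (W k n) x) :=
  threeTermRec_deriv (threeTermRec_of_rec hWrec k) (differentiable_of_threeTermRec (fun _ => hα _)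
    (threeTermRec_of_rec hWrec k) (by rw [funext (hW0 k)]; fun_prop)
    (by rw [funext (hW1 k)]; fun_prop)) x

lemma transferMatrix_mul {α β : ℤ → ℝ} {j : ℤ} {x p q r p' q' r' : ℝ} (hα : α j ≠ 0)
    (h : α (j - 1) * p + β j * q + α j * r = x * q)
    (h' : α (j - 1) * p' + β j * q' + α j * r' = x * q') :
    transferMatrix α β j x * !![p, p'; q, q'] = !![q, q'; r, r'] := by
  have hr : -(α (j - 1) / α j) * p + (x - β j) / α j * q = r := by
    field_simp
    linear_combination -h
  have hr' : -(α (j - 1) / α j) * p' + (x - β j) / α j * q' = r' := by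
    field_simp
    linear_combination -h'
  rw [transferMatrix, Matrix.mul_fin_two, hr, hr']
  simp

/-- The columns of the products are the solutions with `(u₋₁, u₀) = (1, 0)` and
`(a₋₁, a₀) = (0, 1)`. -/
lemma prodDesc_transferMatrix {α β : ℤ → ℝ} {x : ℝ} {u a : ℕ → ℝ} (hα : ∀ j, α j ≠ 0)
    (hu : ThreeTermRec (fun n : ℕ => α n) (fun n : ℕ => β n) x 0 u)
    (ha : ThreeTermRec (fun n : ℕ => α n) (fun n : ℕ => β n) x 0 a)
    (hu₀ : u 0 = 0) (hu₁ : α 0 * u 1 = -α (-1)) (ha₀ : a 0 = 1) (ha₁ : α 0 * a 1 = x - β 0)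
    (k : ℕ) :
    prodDesc (fun j => transferMatrix α β j x) 0 (k + 1) = !![u k, a k; u (k + 1), a (k + 1)] := by
  induction k with
  | zero =>
    have h1 : (1 : Matrix (Fin 2) (Fin 2) ℝ) = !![1, 0; u 0, a 0] := by
      rw [hu₀, ha₀, Matrix.one_fin_two]
    rw [prodDesc, prodDesc, h1]
    apply transferMatrix_mul (hα _)
    · simp [hu₀, hu₁]
    · simp [ha₀, ha₁]
  | succ k ih =>
    rw [prodDesc, ih, zero_add]
    apply transferMatrix_mul (hα _)
    · simpa using hu.homogeneous k
    · simpa using ha.homogeneous k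

theorem stmt6_general (N : ℕ) (hN : 2 ≤ N)
    (α β : ℤ → ℝ) (hαpos : ∀ j, 0 < α j)
    (hαper : ∀ j, α (j + N) = α j)
    -- `W k n` is the orthonormal polynomial `w_n^{[k]}` associated with the shifted sequences
    (W : ℕ → ℕ → ℝ → ℝ)
    (hW0 : ∀ (k : ℕ) (x : ℝ), W k 0 x = 1)
    (hW1 : ∀ (k : ℕ) (x : ℝ), W k 1 x = (x - β k) / α k)
    (hWrec : ∀ k : ℕ, ∀ n : ℕ, 1 ≤ n → ∀ x : ℝ,
      α ((n : ℤ) + k - 1) * W k (n - 1) x + β ((n : ℤ) + k) * W k n x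
        + α ((n : ℤ) + k) * W k (n + 1) x = x * W k n x)
    (x₀ : ℝ) (γ : ℝ) (hγ : γ = -1 ∨ γ = 1)
    (hF : prodDesc (fun j => transferMatrix α β j x₀) 0 N
      = γ • (1 : Matrix (Fin 2) (Fin 2) ℝ)) :
    deriv (W 0 N) x₀ = (α ((N : ℤ) - 1) / α 0) * deriv (W 1 (N - 2)) x₀ ∧
    deriv (W 0 (N - 1)) x₀ * deriv (W 1 (N - 1)) x₀
      > deriv (W 0 N) x₀ * deriv (W 1 (N - 2)) x₀ := by
  obtain ⟨m, rfl⟩ : ∃ m, N = m + 2 := ⟨N - 2, by omega⟩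
  have hα j : α j ≠ 0 := (hαpos j).ne'
  have hrec := threeTermRec_of_rec hWrec
  have hder := threeTermRec_deriv_of_rec hα hW0 hW1 hWrec
  have hd₀ k x : deriv (W k 0) x = 0 := by simp [funext (hW0 k)]
  have hd₁ (k : ℕ) x : α k * deriv (W k 1) x = 1 := by simp [funext (hW1 k), hα]
  set c := α (-1) / α 0 with hc
  obtain ⟨hu, hu'⟩ := ThreeTermRec.prependZero_smul (A := fun n : ℕ => α n)
    (B := fun n : ℕ => β n) (hrec 1 x₀) (hder 1 x₀) (hW0 1 x₀)
    (by simp [hW1, mul_div_cancel₀ _ (hα 1)]) (hd₀ 1 x₀) (by simpa using hd₁ 1 x₀) (-c)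
  have hbd := hF.symm.trans (prodDesc_transferMatrix hα hu (hrec 0 x₀) (by simp [prependZero])
    (by simp [prependZero, hW0, hc, mul_div_cancel₀ _ (hα 0)]) (hW0 0 x₀)
    (by simp [hW1, mul_div_cancel₀ _ (hα 0)]) (m + 1))
  simp only [Matrix.one_fin_two, Matrix.smul_of, Matrix.smul_cons, smul_eq_mul, mul_one, mul_zero,
    Matrix.smul_empty, EmbeddingLike.apply_eq_iff_eq, Matrix.vecCons_inj, and_true] at hbd
  obtain ⟨⟨hu₁, ha₁⟩, hu₂, ha₂⟩ := hbd
  obtain ⟨hd, hlt⟩ := ThreeTermRec.deriv_eq_and_lt_of_boundary (n := m + 1) (hrec 0 x₀)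
    (hder 0 x₀) hu hu' (hW0 0 x₀) (hd₀ 0 x₀) (by simpa using hd₁ 0 x₀) (by simp [prependZero])
    (by simp [prependZero]) (by simp [prependZero, hd₀]) (hαpos _)
    (by rcases hγ with rfl | rfl <;> norm_num) ha₁.symm ha₂.symm hu₁.symm hu₂.symm
  simp only [Pi.smul_apply, prependZero, smul_eq_mul] at hd hlt
  refine ⟨?_, ?_⟩
  · rw [show ((m + 2 : ℕ) : ℤ) - 1 = -1 + (m + 2 : ℕ) by ring, hαper, ← hc]
    simpa using hd
  · have hcpos : 0 < c := div_pos (hαpos _) (hαpos _)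
    show deriv (W 0 (m + 1)) x₀ * deriv (W 1 (m + 1)) x₀ > deriv (W 0 (m + 2)) x₀ * deriv (W 1 m) x₀
    exact lt_of_mul_lt_mul_left (by linear_combination hlt) hcpos.le

theorem stmt6 (N : ℕ) (hN : 2 ≤ N)
    (α β : ℤ → ℝ) (hαpos : ∀ j, 0 < α j)
    (hαper : ∀ j, α (j + N) = α j) (hβper : ∀ j, β (j + N) = β j)
    -- `W k n` is the orthonormal polynomial `w_n^{[k]}` associated with the shifted sequences
    (W : ℕ → ℕ → ℝ → ℝ)
    (hW0 : ∀ (k : ℕ) (x : ℝ), W k 0 x = 1)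
    (hW1 : ∀ (k : ℕ) (x : ℝ), W k 1 x = (x - β k) / α k)
    (hWrec : ∀ k : ℕ, ∀ n : ℕ, 1 ≤ n → ∀ x : ℝ,
      α ((n : ℤ) + k - 1) * W k (n - 1) x + β ((n : ℤ) + k) * W k n x
        + α ((n : ℤ) + k) * W k (n + 1) x = x * W k n x)
    (x₀ : ℝ) (γ : ℝ) (hγ : γ = -1 ∨ γ = 1)
    (hF : prodDesc (fun j => transferMatrix α β j x₀) 0 N
      = γ • (1 : Matrix (Fin 2) (Fin 2) ℝ)) :
    deriv (W 0 N) x₀ = (α ((N : ℤ) - 1) / α 0) * deriv (W 1 (N - 2)) x₀ ∧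
    deriv (W 0 (N - 1)) x₀ * deriv (W 1 (N - 1)) x₀
      > deriv (W 0 N) x₀ * deriv (W 1 (N - 2)) x₀ :=
  stmt6_general N hN α β hαpos hαper W hW0 hW1 hWrec x₀ γ hγ hF
end

section
/- Define h_i(λ) = −discr(𝒞_i(λ)) = 4·det 𝒞_i(λ) − (tr 𝒞_i(λ))² for i = 0, 1, …, N−1, where 𝒞_i(λ) = α_{i−1}·𝒟_i + α_{i−1}·Ĉ^i(λ). Then for every i ∈ {0, …, N−1} and every λ ∈ ℝ: (1) the conjugation identity (1/α_i)·(B̂^i(0))⁻¹·𝒞_{i+1}(λ)·B̂^i(0) = (1/α_{i−1})·𝒞_i(λ) holds; (2) h₀(λ) = (r₀·r₁·⋯·r_{i−1})²·h_i(λ). -/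
open Finset

section ProdDesc

variable (C : ℤ → Matrix (Fin 2) (Fin 2) ℝ)

lemma prodDesc_zero (n₀ : ℤ) : prodDesc C n₀ 0 = 1 := rfl

lemma prodDesc_succ (n₀ : ℤ) (n : ℕ) : prodDesc C n₀ (n + 1) = C (n₀ + n) * prodDesc C n₀ n :=
  rfl

lemma prodDesc_succ' (n₀ : ℤ) (n : ℕ) :
    prodDesc C n₀ (n + 1) = prodDesc C (n₀ + 1) n * C n₀ := by
  induction n with
  | zero => simp [prodDesc_succ, prodDesc_zero]
  | succ n ih =>
    rw [prodDesc_succ, ih, prodDesc_succ, Matrix.mul_assoc]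
    push_cast
    ring_nf

lemma det_prodDesc (n₀ : ℤ) (n : ℕ) :
    (prodDesc C n₀ n).det = ∏ m ∈ range n, (C (n₀ + m)).det := by
  induction n with
  | zero => simp [prodDesc_zero]
  | succ n ih => rw [prodDesc_succ, Matrix.det_mul, ih, prod_range_succ, mul_comm]

variable {C} {N : ℕ} {c : ℝ}

lemma prodDesc_add_one_eq_smul_one {n₀ : ℤ} (hper : C (n₀ + N) = C n₀) (hC : IsUnit (C n₀))
    (h : prodDesc C n₀ N = c • 1) : prodDesc C (n₀ + 1) N = c • 1 := by
  have := hC.invertible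
  rw [← Matrix.mul_left_inj_of_invertible (C n₀), ← prodDesc_succ', prodDesc_succ, hper, h,
    smul_mul_assoc, mul_smul_comm, one_mul, mul_one]

lemma prodDesc_natCast_eq_smul_one (hper : ∀ j, C (j + N) = C j) (hC : ∀ j, IsUnit (C j))
    (h : prodDesc C 0 N = c • 1) (i : ℕ) : prodDesc C i N = c • 1 := by
  induction i with
  | zero => exact h
  | succ i ih => exact_mod_cast prodDesc_add_one_eq_smul_one (hper i) (hC i) ih

end ProdDesc

def prodDescDeriv (B A : ℤ → Matrix (Fin 2) (Fin 2) ℝ) (n₀ : ℤ) (n : ℕ) :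
    Matrix (Fin 2) (Fin 2) ℝ :=
  ∑ j ∈ range n, prodDesc B (n₀ + j + 1) (n - 1 - j) * A (n₀ + j) * prodDesc B n₀ j

section ProdDescDeriv

variable (B A : ℤ → Matrix (Fin 2) (Fin 2) ℝ)

lemma prodDescDeriv_zero (n₀ : ℤ) : prodDescDeriv B A n₀ 0 = 0 := rfl

lemma prodDescDeriv_succ (n₀ : ℤ) (n : ℕ) :
    prodDescDeriv B A n₀ (n + 1)
      = A (n₀ + n) * prodDesc B n₀ n + B (n₀ + n) * prodDescDeriv B A n₀ n := by
  rw [prodDescDeriv, prodDescDeriv, sum_range_succ, add_comm, mul_sum]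
  congr 1
  · simp [prodDesc_zero]
  · refine sum_congr rfl fun j hj => ?_
    obtain ⟨k, rfl⟩ : ∃ k, n = j + 1 + k := ⟨n - j - 1, by have := mem_range.mp hj; omega⟩
    rw [show j + 1 + k + 1 - 1 - j = k + 1 by omega, show j + 1 + k - 1 - j = k by omega,
      prodDesc_succ, Matrix.mul_assoc, Matrix.mul_assoc, Matrix.mul_assoc]
    push_cast
    ring_nf

lemma prodDescDeriv_succ' (n₀ : ℤ) (n : ℕ) :
    prodDescDeriv B A n₀ (n + 1)
      = prodDescDeriv B A (n₀ + 1) n * B n₀ + prodDesc B (n₀ + 1) n * A n₀ := by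
  induction n with
  | zero => simp [prodDescDeriv_succ, prodDescDeriv_zero, prodDesc_zero]
  | succ n ih =>
    rw [prodDescDeriv_succ, ih, prodDesc_succ', prodDescDeriv_succ, prodDesc_succ]
    push_cast
    rw [show n₀ + (n + 1 : ℤ) = n₀ + 1 + n by ring]
    noncomm_ring

lemma hasDerivAt_prodDesc_add_smul_apply (n₀ : ℤ) (n : ℕ) (a b : Fin 2) :
    HasDerivAt (fun x : ℝ => prodDesc (fun j => B j + x • A j) n₀ n a b)
      (prodDescDeriv B A n₀ n a b) 0 := by
  induction n generalizing a b with
  | zero =>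
    simpa [prodDesc_zero, prodDescDeriv_zero] using
      hasDerivAt_const (0 : ℝ) ((1 : Matrix (Fin 2) (Fin 2) ℝ) a b)
  | succ n ih =>
    simp only [prodDesc_succ, prodDescDeriv_succ, Matrix.mul_apply, Fin.sum_univ_two,
      Matrix.add_apply, Matrix.smul_apply, smul_eq_mul]
    have hB : ∀ a c, HasDerivAt (fun x : ℝ => B (n₀ + n) a c + x * A (n₀ + n) a c)
        (A (n₀ + n) a c) 0 := fun a c => by
      simpa using ((hasDerivAt_id (0 : ℝ)).mul_const (A (n₀ + n) a c)).const_add (B (n₀ + n) a c)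
    refine (((hB a 0).mul (ih 0 b)).add ((hB a 1).mul (ih 1 b))).congr_deriv ?_
    simp only [zero_smul, add_zero, zero_mul]
    ring

variable {B A} {N : ℕ} {n₀ : ℤ} {c : ℝ}

lemma mul_prodDescDeriv (hB : B (n₀ + N) = B n₀) (hA : A (n₀ + N) = A n₀)
    (h₀ : prodDesc B n₀ N = c • 1) (h₁ : prodDesc B (n₀ + 1) N = c • 1) :
    B n₀ * prodDescDeriv B A n₀ N = prodDescDeriv B A (n₀ + 1) N * B n₀ := by
  have h := (prodDescDeriv_succ B A n₀ N).symm.trans (prodDescDeriv_succ' B A n₀ N)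
  rw [hA, hB, h₀, h₁, mul_smul_comm, smul_mul_assoc, mul_one, one_mul, add_comm] at h
  exact add_right_cancel h

lemma mul_prodDescDeriv_of_periodic (hB : ∀ j, B (j + N) = B j) (hBu : ∀ j, IsUnit (B j))
    (h : prodDesc B 0 N = c • 1) {i : ℕ} (hA : A (i + N) = A i) :
    B i * prodDescDeriv B A i N = prodDescDeriv B A (i + 1) N * B i :=
  mul_prodDescDeriv (hB i) hA (prodDesc_natCast_eq_smul_one hB hBu h i)
    (by exact_mod_cast prodDesc_natCast_eq_smul_one hB hBu h (i + 1))

lemma sum_smul_eq_prodDescDeriv (B : ℤ → Matrix (Fin 2) (Fin 2) ℝ) (a : ℤ → ℝ) (s z : ℕ → ℝ)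
    (i N : ℕ) :
    ∑ j ∈ range N, a (i + j) •
        (prodDesc B (i + j + 1) (N - 1 - j) * !![0, 0; s (i + j), z (i + j)] * prodDesc B i j)
      = prodDescDeriv B (fun k => a k • !![0, 0; s k.toNat, z k.toNat]) i N := by
  refine sum_congr rfl fun j _ => ?_
  rw [Matrix.mul_smul, Matrix.smul_mul]
  congr 4

end ProdDescDeriv

lemma isUnit_companion {a : ℝ} (ha : a ≠ 0) (b : ℝ) : IsUnit !![0, 1; -a, -b] :=
  (Matrix.isUnit_iff_isUnit_det _).2 <| by simpa [Matrix.det_fin_two_of] using ha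

lemma eq_prod_sq_mul_of_succ {f g : ℕ → ℝ} (h : ∀ i, f i = g i ^ 2 * f (i + 1)) (n : ℕ) :
    f 0 = (∏ k ∈ range n, g k) ^ 2 * f n := by
  induction n with
  | zero => simp
  | succ n ih => rw [ih, h n, prod_range_succ]; ring

lemma Function.Periodic.apply_emod {X : Type*} {f : ℤ → X} {N : ℤ} (h : Function.Periodic f N)
    (j : ℤ) : f (j % N) = f j := by
  rw [Int.emod_def, mul_comm]
  exact h.sub_int_mul_eq _

lemma negDiscr_smul (c : ℝ) (X : Matrix (Fin 2) (Fin 2) ℝ) :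
    4 * (c • X).det - (c • X).trace ^ 2 = c ^ 2 * (4 * X.det - X.trace ^ 2) := by
  rw [Matrix.det_smul, Matrix.trace_smul, Fintype.card_fin, smul_eq_mul]
  ring

lemma exists_natCast_eq_emod {N : ℕ} (hN : 0 < N) (j : ℤ) : ∃ m : ℕ, (m : ℤ) = j % N ∧ m < N :=
  ⟨(j % N).toNat, Int.toNat_of_nonneg (Int.emod_nonneg _ (by omega)),
    by have := Int.emod_lt_of_pos j (show (0 : ℤ) < N by omega); omega⟩

section Modulating

variable {N : ℕ} {r q α : ℤ → ℝ}

lemma prod_range_eq_one_of_prodDesc_eq_smul_one {γ : ℝ} (hγ : γ = -1 ∨ γ = 1)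
    (hProd : prodDesc (fun i => !![0, 1; -r i, -q i]) 0 N = γ • 1) :
    ∏ k ∈ range N, r k = 1 := by
  have h := congrArg Matrix.det hProd
  rw [det_prodDesc, Matrix.det_smul, Matrix.det_one, Fintype.card_fin] at h
  simp only [Matrix.det_fin_two_of, zero_add, zero_mul, one_mul, zero_sub, neg_neg] at h
  rw [h]
  rcases hγ with rfl | rfl <;> norm_num

lemma alpha_natCast_sub_one (hαper : ∀ j, α (j + N) = α j)
    (hαdef : ∀ i : ℕ, i < N → α i = ∏ k ∈ Ico (i + 1) N, r k) (hr : ∏ k ∈ range N, r k = 1)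
    {m : ℕ} (hm : m < N) : α ((m : ℤ) - 1) = ∏ k ∈ Ico m N, r k := by
  cases m with
  | zero =>
    rw [← hαper, show ((0 : ℕ) : ℤ) - 1 + N = ((N - 1 : ℕ) : ℤ) by omega, hαdef _ (by omega),
      Nat.sub_add_cancel (by omega), Ico_self, prod_empty, ← range_eq_Ico, hr]
  | succ m => simpa using hαdef m (by omega)

lemma alpha_pos (hN : 0 < N) (hrpos : ∀ i, 0 < r i) (hαper : ∀ j, α (j + N) = α j)
    (hαdef : ∀ i : ℕ, i < N → α i = ∏ k ∈ Ico (i + 1) N, r k) (j : ℤ) : 0 < α j := by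
  obtain ⟨m, hm, hmN⟩ := exists_natCast_eq_emod hN j
  rw [← Function.Periodic.apply_emod hαper, ← hm, hαdef m hmN]
  exact prod_pos fun k _ => hrpos k

lemma alpha_sub_one (hN : 0 < N) (hrper : ∀ i, r (i + N) = r i) (hαper : ∀ j, α (j + N) = α j)
    (hαdef : ∀ i : ℕ, i < N → α i = ∏ k ∈ Ico (i + 1) N, r k) (hr : ∏ k ∈ range N, r k = 1)
    (j : ℤ) : α (j - 1) = r j * α j := by
  obtain ⟨m, hm, hmN⟩ := exists_natCast_eq_emod hN j
  have hα : Function.Periodic α N := hαper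
  have hshift : α (j - 1) = α (m - 1) := by
    rw [hm]
    exact ((hα.sub_const 1).apply_emod j).symm
  rw [hshift, ← Function.Periodic.apply_emod hrper, ← hα.apply_emod j, ← hm,
    alpha_natCast_sub_one hαper hαdef hr hmN, hαdef m hmN, prod_eq_prod_Ico_succ_bot hmN]

end Modulating

structure IsAssociatedOrthonormal (α β : ℤ → ℝ) (W : ℕ → ℕ → ℝ → ℝ) : Prop where
  apply_zero : ∀ (k : ℕ) (x : ℝ), W k 0 x = 1
  apply_one : ∀ (k : ℕ) (x : ℝ), W k 1 x = (x - β k) / α k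
  recurrence : ∀ k : ℕ, ∀ n : ℕ, 1 ≤ n → ∀ x : ℝ,
    α ((n : ℤ) + k - 1) * W k (n - 1) x + β ((n : ℤ) + k) * W k n x
      + α ((n : ℤ) + k) * W k (n + 1) x = x * W k n x

namespace IsAssociatedOrthonormal

variable {r q α β : ℤ → ℝ} {W : ℕ → ℕ → ℝ → ℝ}

lemma apply_one' (hW : IsAssociatedOrthonormal α β W) (hα : ∀ j, α j ≠ 0)
    (hβ : ∀ j, β j = α j * q j) (k : ℕ) (x : ℝ) : W k 1 x = x / α k - q k := by
  rw [hW.apply_one, hβ]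
  field_simp [hα]

lemma apply_add_two (hW : IsAssociatedOrthonormal α β W) (hα : ∀ j, α j ≠ 0)
    (hr : ∀ j, α (j - 1) = r j * α j) (hβ : ∀ j, β j = α j * q j) (k n : ℕ) (x : ℝ) :
    W k (n + 2) x = (x / α (k + n + 1 : ℕ) - q (k + n + 1 : ℕ)) * W k (n + 1) x
      - r (k + n + 1 : ℕ) * W k n x := by
  have h := hW.recurrence k (n + 1) (by omega) x
  rw [show ((n + 1 : ℕ) : ℤ) + k = (k + n + 1 : ℕ) by push_cast; ring, hβ, hr,
    Nat.add_sub_cancel] at h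
  field_simp [hα]
  linear_combination h

lemma prodDesc_transfer_eq (hW : IsAssociatedOrthonormal α β W) (hα : ∀ j, α j ≠ 0)
    (hr : ∀ j, α (j - 1) = r j * α j) (hβ : ∀ j, β j = α j * q j) (i n : ℕ) (x : ℝ) :
    prodDesc (fun j => !![0, 1; -r j, x / α j - q j]) i (n + 2)
      = !![-r i * W (i + 1) n x, W i (n + 1) x; -r i * W (i + 1) (n + 1) x, W i (n + 2) x] := by
  induction n with
  | zero =>
    rw [prodDesc_succ, prodDesc_succ, prodDesc_zero, Matrix.mul_one, Matrix.mul_fin_two,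
      hW.apply_add_two hα hr hβ, hW.apply_zero, hW.apply_zero, hW.apply_one' hα hβ,
      hW.apply_one' hα hβ]
    ext a b
    fin_cases a <;> fin_cases b <;> simp <;> ring
  | succ n ih =>
    rw [prodDesc_succ, ih, Matrix.mul_fin_two, hW.apply_add_two hα hr hβ i (n + 1),
      hW.apply_add_two hα hr hβ (i + 1) n, show i + (n + 1) + 1 = i + 1 + n + 1 by ring,
      show (i : ℤ) + (n + 2 : ℕ) = (i + 1 + n + 1 : ℕ) by push_cast; ring]
    ext a b
    fin_cases a <;> fin_cases b <;> simp <;> ring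

lemma derivMatrix_eq_prodDescDeriv (hW : IsAssociatedOrthonormal α β W) (hα : ∀ j, α j ≠ 0)
    (hr : ∀ j, α (j - 1) = r j * α j) (hβ : ∀ j, β j = α j * q j) {N : ℕ} (hN : 2 ≤ N) (i : ℕ) :
    !![-(α ((i : ℤ) - 1) / α (i : ℤ)) * deriv (W (i + 1) (N - 2)) 0, deriv (W i (N - 1)) 0;
       -(α ((i : ℤ) - 1) / α (i : ℤ)) * deriv (W (i + 1) (N - 1)) 0, deriv (W i N) 0]
      = prodDescDeriv (fun j => !![0, 1; -r j, -q j]) (fun j => !![0, 0; 0, 1 / α j]) i N := by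
  obtain ⟨n, rfl⟩ : ∃ n, N = n + 2 := ⟨N - 2, by omega⟩
  have hratio : α ((i : ℤ) - 1) / α i = r i := by rw [hr, mul_div_cancel_right₀ _ (hα _)]
  have hP : ∀ x : ℝ,
      prodDesc (fun j => !![0, 1; -r j, -q j] + x • !![0, 0; 0, 1 / α j]) i (n + 2)
        = !![-r i * W (i + 1) n x, W i (n + 1) x; -r i * W (i + 1) (n + 1) x, W i (n + 2) x] :=
    fun x => by
      rw [← hW.prodDesc_transfer_eq hα hr hβ]
      congr 1
      funext j
      ext a b
      fin_cases a <;> fin_cases b <;> simp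
      ring
  have hD := hasDerivAt_prodDesc_add_smul_apply (fun j => !![0, 1; -r j, -q j])
    (fun j => !![0, 0; 0, 1 / α j]) i (n + 2)
  simp only [hP] at hD
  rw [Matrix.eta_fin_two (prodDescDeriv _ _ _ _), ← (hD 0 0).deriv, ← (hD 0 1).deriv,
    ← (hD 1 0).deriv, ← (hD 1 1).deriv]
  simp [hratio, deriv_const_mul_field']

end IsAssociatedOrthonormal

theorem stmt15_general (N : ℕ) (hN : 2 ≤ N)
    (r q : ℤ → ℝ) (hrpos : ∀ i, 0 < r i)
    (hrper : ∀ i, r (i + N) = r i) (hqper : ∀ i, q (i + N) = q i)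
    (γ : ℝ) (hγ : γ = -1 ∨ γ = 1)
    (hProd : prodDesc (fun i => !![0, 1; -r i, -q i]) 0 N
      = γ • (1 : Matrix (Fin 2) (Fin 2) ℝ))
    -- the modulating sequences α, β built from r and q
    (α β : ℤ → ℝ)
    (hαper : ∀ j, α (j + N) = α j)
    (hαdef : ∀ i : ℕ, i < N → α i = ∏ k ∈ Finset.Ico (i + 1) N, r k)
    (hβdef : ∀ j, β j = α j * q j)
    -- `W k n` is the orthonormal polynomial `w_n^{[k]}` associated with the shifted sequences
    (W : ℕ → ℕ → ℝ → ℝ)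
    (hW0 : ∀ (k : ℕ) (x : ℝ), W k 0 x = 1)
    (hW1 : ∀ (k : ℕ) (x : ℝ), W k 1 x = (x - β k) / α k)
    (hWrec : ∀ k : ℕ, ∀ n : ℕ, 1 ≤ n → ∀ x : ℝ,
      α ((n : ℤ) + k - 1) * W k (n - 1) x + β ((n : ℤ) + k) * W k n x
        + α ((n : ℤ) + k) * W k (n + 1) x = x * W k n x)
    (s z : ℕ → ℝ) (hsper : ∀ n, s (n + N) = s n) (hzper : ∀ n, z (n + N) = z n)
    -- the matrices `𝒞_i(λ) = α_{i−1} 𝒟_i + α_{i−1} Ĉ^i(λ)`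
    (Cl : ℕ → ℝ → Matrix (Fin 2) (Fin 2) ℝ)
    (hCl : ∀ (i : ℕ) (w : ℝ), Cl i w = α ((i : ℤ) - 1) •
      ((∑ j ∈ Finset.range N, (1 / α ((i : ℤ) + j)) •
          (prodDesc (fun t => !![0, 1; -r t, -q t]) ((i : ℤ) + j + 1) (N - 1 - j)
            * !![0, 0; s (i + j), z (i + j)]
            * prodDesc (fun t => !![0, 1; -r t, -q t]) (i : ℤ) j))
        + w • !![-(α ((i : ℤ) - 1) / α (i : ℤ)) * deriv (W (i + 1) (N - 2)) 0,
                  deriv (W i (N - 1)) 0;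
                 -(α ((i : ℤ) - 1) / α (i : ℤ)) * deriv (W (i + 1) (N - 1)) 0,
                  deriv (W i N) 0]))
    -- the functions `h_i = −discr(𝒞_i)`
    (h : ℕ → ℝ → ℝ)
    (hh : ∀ (i : ℕ) (w : ℝ), h i w = 4 * (Cl i w).det - ((Cl i w).trace) ^ 2) :
    ∀ i < N, ∀ w : ℝ,
      (1 / α (i : ℤ)) • ((!![0, 1; -r (i : ℤ), -q (i : ℤ)])⁻¹ * Cl (i + 1) w
          * !![0, 1; -r (i : ℤ), -q (i : ℤ)])
        = (1 / α ((i : ℤ) - 1)) • Cl i w ∧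
      h 0 w = (∏ k ∈ Finset.range i, r k) ^ 2 * h i w := by
  have hN0 : 0 < N := by omega
  have hα : ∀ j, α j ≠ 0 := fun j => (alpha_pos hN0 hrpos hαper hαdef j).ne'
  have hr := alpha_sub_one hN0 hrper hαper hαdef
    (prod_range_eq_one_of_prodDesc_eq_smul_one hγ hProd)
  have hW : IsAssociatedOrthonormal α β W := ⟨hW0, hW1, hWrec⟩
  set B : ℤ → Matrix (Fin 2) (Fin 2) ℝ := fun t => !![0, 1; -r t, -q t]
  have hBunit : ∀ j, IsUnit (B j) := fun j => isUnit_companion (hrpos j).ne' _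
  have hBper : ∀ j, B (j + N) = B j := fun j => by simp [B, hrper, hqper]
  -- `s` and `z` are indexed by `ℕ`; `toNat` is only ever evaluated at nonnegative indices
  set X : ℕ → ℝ → Matrix (Fin 2) (Fin 2) ℝ := fun i w =>
    prodDescDeriv B (fun k => (1 / α k) • !![0, 0; s k.toNat, z k.toNat]) i N
      + w • prodDescDeriv B (fun k => !![0, 0; 0, 1 / α k]) i N
  have hClX : ∀ (i : ℕ) (w : ℝ), Cl i w = α ((i : ℤ) - 1) • X i w := fun i w => by
    rw [hCl, hW.derivMatrix_eq_prodDescDeriv hα hr hβdef hN]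
    congr 2
    exact sum_smul_eq_prodDescDeriv B (fun k => 1 / α k) s z i N
  have hClX_succ : ∀ (i : ℕ) (w : ℝ), Cl (i + 1) w = α i • X (i + 1) w := fun i w => by
    rw [hClX, Nat.cast_succ, add_sub_cancel_right]
  have hXconj : ∀ (i : ℕ) (w : ℝ), X i w = (B i)⁻¹ * X (i + 1) w * B i := fun i w => by
    have hs : ((i : ℤ) + N).toNat = i + N := by omega
    have hconj : B i * X i w = X (i + 1) w * B i := by
      simp only [X, Matrix.mul_add, Matrix.add_mul, Matrix.mul_smul, Matrix.smul_mul,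
        Nat.cast_succ]
      rw [mul_prodDescDeriv_of_periodic hBper hBunit hProd,
        mul_prodDescDeriv_of_periodic hBper hBunit hProd]
      · rw [hαper]
      · rw [hαper, hs, hsper, hzper, Int.toNat_natCast]
    rw [Matrix.mul_assoc, ← hconj, Matrix.nonsing_inv_mul_cancel_left _ _
      ((Matrix.isUnit_iff_isUnit_det _).1 (hBunit i))]
  have hh_succ : ∀ (i : ℕ) (w : ℝ), h i w = r i ^ 2 * h (i + 1) w := fun i w => by
    rw [hh, hh, hClX, hClX_succ, negDiscr_smul, negDiscr_smul, hXconj i w,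
      Matrix.det_conj' (hBunit i), Matrix.trace_conj' (hBunit i), hr]
    ring
  intro i _ w
  refine ⟨?_, eq_prod_sq_mul_of_succ (hh_succ · w) i⟩
  rw [hClX_succ, hClX, Matrix.mul_smul, Matrix.smul_mul, smul_smul, smul_smul,
    one_div_mul_cancel (hα _), one_div_mul_cancel (hα _), one_smul, one_smul, ← hXconj]

theorem stmt15 (N : ℕ) (hN : 2 ≤ N)
    (r q : ℤ → ℝ) (hrpos : ∀ i, 0 < r i)
    (hrper : ∀ i, r (i + N) = r i) (hqper : ∀ i, q (i + N) = q i)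
    (γ : ℝ) (hγ : γ = -1 ∨ γ = 1)
    (hProd : prodDesc (fun i => !![0, 1; -r i, -q i]) 0 N
      = γ • (1 : Matrix (Fin 2) (Fin 2) ℝ))
    -- the modulating sequences α, β built from r and q
    (α β : ℤ → ℝ)
    (hαper : ∀ j, α (j + N) = α j) (hβper : ∀ j, β (j + N) = β j)
    (hαdef : ∀ i : ℕ, i < N → α i = ∏ k ∈ Finset.Ico (i + 1) N, r k)
    (hβdef : ∀ j, β j = α j * q j)
    -- `W k n` is the orthonormal polynomial `w_n^{[k]}` associated with the shifted sequences
    (W : ℕ → ℕ → ℝ → ℝ)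
    (hW0 : ∀ (k : ℕ) (x : ℝ), W k 0 x = 1)
    (hW1 : ∀ (k : ℕ) (x : ℝ), W k 1 x = (x - β k) / α k)
    (hWrec : ∀ k : ℕ, ∀ n : ℕ, 1 ≤ n → ∀ x : ℝ,
      α ((n : ℤ) + k - 1) * W k (n - 1) x + β ((n : ℤ) + k) * W k n x
        + α ((n : ℤ) + k) * W k (n + 1) x = x * W k n x)
    (s z : ℕ → ℝ) (hsper : ∀ n, s (n + N) = s n) (hzper : ∀ n, z (n + N) = z n)
    -- the matrices `𝒞_i(λ) = α_{i−1} 𝒟_i + α_{i−1} Ĉ^i(λ)`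
    (Cl : ℕ → ℝ → Matrix (Fin 2) (Fin 2) ℝ)
    (hCl : ∀ (i : ℕ) (w : ℝ), Cl i w = α ((i : ℤ) - 1) •
      ((∑ j ∈ Finset.range N, (1 / α ((i : ℤ) + j)) •
          (prodDesc (fun t => !![0, 1; -r t, -q t]) ((i : ℤ) + j + 1) (N - 1 - j)
            * !![0, 0; s (i + j), z (i + j)]
            * prodDesc (fun t => !![0, 1; -r t, -q t]) (i : ℤ) j))
        + w • !![-(α ((i : ℤ) - 1) / α (i : ℤ)) * deriv (W (i + 1) (N - 2)) 0,
                  deriv (W i (N - 1)) 0;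
                 -(α ((i : ℤ) - 1) / α (i : ℤ)) * deriv (W (i + 1) (N - 1)) 0,
                  deriv (W i N) 0]))
    -- the functions `h_i = −discr(𝒞_i)`
    (h : ℕ → ℝ → ℝ)
    (hh : ∀ (i : ℕ) (w : ℝ), h i w = 4 * (Cl i w).det - ((Cl i w).trace) ^ 2) :
    ∀ i < N, ∀ w : ℝ,
      (1 / α (i : ℤ)) • ((!![0, 1; -r (i : ℤ), -q (i : ℤ)])⁻¹ * Cl (i + 1) w
          * !![0, 1; -r (i : ℤ), -q (i : ℤ)])
        = (1 / α ((i : ℤ) - 1)) • Cl i w ∧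
      h 0 w = (∏ k ∈ Finset.range i, r k) ^ 2 * h i w :=
  stmt15_general N hN r q hrpos hrper hqper γ hγ hProd α β hαper hαdef hβdef W hW0 hW1 hWrec s z
    hsper hzper Cl hCl h hh
end
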